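/- Let d be an even positive integer, let 0 < ε ≤ 1/8, let Θ be the diagonal d×d matrix with k-th diagonal entry (−1)^k (k = 1, …, d) and ρ0 = (I_d + 8εΘ)/d. Then for any d×d unitary matrices U_1, …, U_N, setting ρ_i = U_i ρ0 U_iᴴ and ρ̄ = (1/N) Σ_{j=1}^N ρ_j, one has (1/N) Σ_{i=1}^N ‖ρ_i − ρ̄‖₁ ≥ 8ε − (1/N²) Σ_{i=1}^N Σ_{j=1}^N Re Tr[Θ U_iᴴ U_j ρ0 U_jᴴ U_i]. -/

import Mathlib

open Matrix Finset
open scoped ComplexOrder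

/-- The trace norm `‖A‖₁ = Tr √(Aᴴ A)` of a complex matrix. -/
noncomputable def traceNorm {d : ℕ} (A : Matrix (Fin d) (Fin d) ℂ) : ℝ :=
  (((Matrix.posSemidef_conjTranspose_mul_self A).1.eigenvectorUnitary *
      Matrix.diagonal (((↑) : ℝ → ℂ) ∘ (Real.sqrt ·) ∘
        (Matrix.posSemidef_conjTranspose_mul_self A).1.eigenvalues) *
      (star (Matrix.posSemidef_conjTranspose_mul_self A).1.eigenvectorUnitary :
        Matrix (Fin d) (Fin d) ℂ)).trace).re

/-- The diagonal matrix `Θ` whose `k`-th diagonal entry is `(−1)^k`, `k = 1, …, d`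
(index `k : Fin d` corresponds to the `(k+1)`-st entry). -/
noncomputable def Theta (d : ℕ) : Matrix (Fin d) (Fin d) ℂ :=
  Matrix.diagonal fun k => (-1 : ℂ) ^ ((k : ℕ) + 1)

/-- The state `ρ0 = (I_d + 8 ε Θ)/d`. -/
noncomputable def rho0 (d : ℕ) (ε : ℝ) : Matrix (Fin d) (Fin d) ℂ :=
  ((d : ℂ))⁻¹ • (1 + ((8 * ε : ℝ) : ℂ) • Theta d)

/-! Testing a Hermitian matrix `A` against a unitary `B` bounds its trace norm: if `P` is a
unitary eigenbasis of `A`, then `Re Tr (B A) = Σₖ Re (Pᴴ B P)ₖₖ λₖ ≤ Σₖ |λₖ| = ‖A‖₁`, because the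
entries of the unitary `Pᴴ B P` have modulus at most `1`. Test `ρᵢ − ρ̄` against `Bᵢ = Uᵢ Θ Uᵢᴴ`:
since `Θ² = 1` and `Tr Θ = 0` (`d` even), `Tr (Bᵢ ρᵢ) = Tr (Θ ρ0) = 8ε`, while
`Tr (Bᵢ ρⱼ) = Tr [Θ Uᵢᴴ Uⱼ ρ0 Uⱼᴴ Uᵢ]`; averaging over `i` gives the bound. -/

namespace Matrix

variable {n R : Type*} [Fintype n] [DecidableEq n] [CommRing R] [StarRing R]

lemma trace_mul_mul_star_of_mem_unitaryGroup {U : Matrix n n R} (hU : U ∈ unitaryGroup n R)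
    (X : Matrix n n R) : (U * X * star U).trace = X.trace := by
  rw [trace_mul_cycle, mem_unitaryGroup_iff'.mp hU, one_mul]

lemma trace_conj_mul_conj_of_mem_unitaryGroup {U : Matrix n n R} (hU : U ∈ unitaryGroup n R)
    (X Y : Matrix n n R) : (U * X * Uᴴ * (U * Y * Uᴴ)).trace = (X * Y).trace := by
  have hUU : Uᴴ * U = 1 := mem_unitaryGroup_iff'.mp hU
  rw [show U * X * Uᴴ * (U * Y * Uᴴ) = U * (X * (Uᴴ * U) * Y) * star U by
    simp only [mul_assoc, star_eq_conjTranspose], hUU, mul_one,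
    trace_mul_mul_star_of_mem_unitaryGroup hU]

end Matrix

open scoped MatrixOrder

lemma traceNorm_eq_re_trace_abs {d : ℕ} (A : Matrix (Fin d) (Fin d) ℂ) :
    traceNorm A = (CFC.abs A).trace.re := by
  rw [CFC.abs, star_eq_conjTranspose,
    CFC.sqrt_eq_real_sqrt _ (posSemidef_conjTranspose_mul_self A).nonneg, cfcₙ_eq_cfc,
    (posSemidef_conjTranspose_mul_self A).1.cfc_eq, IsHermitian.cfc, Unitary.conjStarAlgAut_apply]
  rfl

lemma Matrix.IsHermitian.traceNorm_eq_sum_abs_eigenvalues {d : ℕ}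
    {A : Matrix (Fin d) (Fin d) ℂ} (hA : A.IsHermitian) :
    traceNorm A = ∑ k, |hA.eigenvalues k| := by
  rw [traceNorm_eq_re_trace_abs, CFC.abs_eq_cfc_norm A hA.isSelfAdjoint, hA.cfc_eq,
    IsHermitian.cfc, Unitary.conjStarAlgAut_apply,
    trace_mul_mul_star_of_mem_unitaryGroup hA.eigenvectorUnitary.2, trace_diagonal]
  simp

lemma Matrix.IsHermitian.re_trace_mul_le_traceNorm {d : ℕ} {A B : Matrix (Fin d) (Fin d) ℂ}
    (hA : A.IsHermitian) (hB : B ∈ unitaryGroup (Fin d) ℂ) :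
    (B * A).trace.re ≤ traceNorm A := by
  set P : Matrix (Fin d) (Fin d) ℂ := (hA.eigenvectorUnitary : Matrix (Fin d) (Fin d) ℂ)
  have hP : star P * B * P ∈ unitaryGroup (Fin d) ℂ :=
    mul_mem (mul_mem (Unitary.star_mem hA.eigenvectorUnitary.2) hB) hA.eigenvectorUnitary.2
  have htrace : (B * A).trace = ∑ k, (star P * B * P) k k * hA.eigenvalues k := by
    conv_lhs => rw [hA.spectral_theorem, Unitary.conjStarAlgAut_apply, ← mul_assoc,
      ← mul_assoc, trace_mul_cycle, ← mul_assoc]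
    simp [P, trace, mul_diagonal]
  rw [hA.traceNorm_eq_sum_abs_eigenvalues, htrace, Complex.re_sum]
  refine sum_le_sum fun k _ => ?_
  calc ((star P * B * P) k k * hA.eigenvalues k).re
      ≤ ‖(star P * B * P) k k * hA.eigenvalues k‖ := Complex.re_le_norm _
    _ ≤ |hA.eigenvalues k| := by
      rw [norm_mul, Complex.norm_real, Real.norm_eq_abs]
      exact mul_le_of_le_one_left (abs_nonneg _) (entry_norm_bound_of_unitary hP k k)

lemma sum_re_trace_mul_sub_le_sum_traceNorm {ι : Type*} [Fintype ι] {d : ℕ}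
    (ρ B : ι → Matrix (Fin d) (Fin d) ℂ) (hρ : ∀ i, (ρ i).IsHermitian)
    (hB : ∀ i, B i ∈ unitaryGroup (Fin d) ℂ) :
    ∑ i, (B i * ρ i).trace.re - (Fintype.card ι : ℝ)⁻¹ * ∑ i, ∑ j, (B i * ρ j).trace.re
      ≤ ∑ i, traceNorm (ρ i - (Fintype.card ι : ℂ)⁻¹ • ∑ j, ρ j) := by
  have hmean : ((Fintype.card ι : ℂ)⁻¹ • ∑ j, ρ j).IsHermitian := by
    simp [IsHermitian, conjTranspose_sum, fun j => (hρ j).eq]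
  rw [mul_sum, ← sum_sub_distrib]
  refine sum_le_sum fun i _ => ?_
  calc _ = (B i * (ρ i - (Fintype.card ι : ℂ)⁻¹ • ∑ j, ρ j)).trace.re := by
        rw [mul_sub, trace_sub, Matrix.mul_smul, Matrix.mul_sum, trace_smul, trace_sum]
        simp
    _ ≤ _ := ((hρ i).sub hmean).re_trace_mul_le_traceNorm (hB i)

lemma Theta_mul_self (d : ℕ) : Theta d * Theta d = 1 := by
  simp [Theta, ← pow_add, ← two_mul]

lemma isHermitian_Theta (d : ℕ) : (Theta d).IsHermitian := by
  simp [Theta, IsHermitian, diagonal_conjTranspose]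

lemma Theta_mem_unitaryGroup (d : ℕ) : Theta d ∈ unitaryGroup (Fin d) ℂ := by
  rw [mem_unitaryGroup_iff', star_eq_conjTranspose, (isHermitian_Theta d).eq, Theta_mul_self]

lemma trace_Theta {d : ℕ} (hd : Even d) : (Theta d).trace = 0 := by
  rw [Theta, trace_diagonal, Fin.sum_univ_eq_sum_range (fun k => (-1 : ℂ) ^ (k + 1)) d]
  simp [pow_succ, neg_one_geom_sum, hd]

lemma isHermitian_rho0 (d : ℕ) (ε : ℝ) : (rho0 d ε).IsHermitian := by
  simp [rho0, IsHermitian, (isHermitian_Theta d).eq, star_inv₀]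

lemma trace_Theta_mul_rho0 {d : ℕ} (hd : d ≠ 0) (hd_even : Even d) (ε : ℝ) :
    (Theta d * rho0 d ε).trace = 8 * ε := by
  rw [rho0, Matrix.mul_smul, mul_add, mul_one, Matrix.mul_smul, Theta_mul_self, trace_smul,
    trace_add, trace_Theta hd_even, trace_smul, trace_one, Fintype.card_fin, smul_eq_mul,
    smul_eq_mul]
  field_simp
  push_cast
  ring

theorem mean_traceDist_lower_bound_general (d N : ℕ) (hd : 0 < d) (hdeven : Even d) (hN : 0 < N)
    (ε : ℝ)
    (U : Fin N → Matrix (Fin d) (Fin d) ℂ)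
    (hU : ∀ i, U i ∈ Matrix.unitaryGroup (Fin d) ℂ) :
    8 * ε - ((N : ℝ) ^ 2)⁻¹ *
        ∑ i, ∑ j, ((Theta d * (U i)ᴴ * U j * rho0 d ε * (U j)ᴴ * U i).trace).re
      ≤ (N : ℝ)⁻¹ *
        ∑ i, traceNorm (U i * rho0 d ε * (U i)ᴴ
          - ((N : ℂ))⁻¹ • ∑ j, U j * rho0 d ε * (U j)ᴴ) := by
  set ρ : Fin N → Matrix (Fin d) (Fin d) ℂ := fun i => U i * rho0 d ε * (U i)ᴴ
  set B : Fin N → Matrix (Fin d) (Fin d) ℂ := fun i => U i * Theta d * (U i)ᴴ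
  have hρ i : (ρ i).IsHermitian := isHermitian_mul_mul_conjTranspose _ (isHermitian_rho0 d ε)
  have hB i : B i ∈ unitaryGroup (Fin d) ℂ :=
    mul_mem (mul_mem (hU i) (Theta_mem_unitaryGroup d)) (Unitary.star_mem (hU i))
  have hdiag i : (B i * ρ i).trace.re = 8 * ε := by
    rw [trace_conj_mul_conj_of_mem_unitaryGroup (hU i), trace_Theta_mul_rho0 hd.ne' hdeven]
    simp
  have hoff i j : (B i * ρ j).trace =
      (Theta d * (U i)ᴴ * U j * rho0 d ε * (U j)ᴴ * U i).trace := by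
    rw [show B i * ρ j = U i * (Theta d * (U i)ᴴ * U j * rho0 d ε * (U j)ᴴ) by
      simp only [B, ρ, mul_assoc], trace_mul_comm]
  have hsum := sum_re_trace_mul_sub_le_sum_traceNorm ρ B hρ hB
  simp only [hdiag, sum_const, card_univ, Fintype.card_fin, nsmul_eq_mul] at hsum
  simp only [hoff] at hsum
  calc _ = (N : ℝ)⁻¹ * (N * (8 * ε) - (N : ℝ)⁻¹ *
        ∑ i, ∑ j, ((Theta d * (U i)ᴴ * U j * rho0 d ε * (U j)ᴴ * U i).trace).re) := by
        field_simp
    _ ≤ _ := by gcongr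

/-- For unitaries `U₁, …, U_N`, with `ρᵢ = Uᵢ ρ0 Uᵢᴴ` and `ρ̄` their average,
`(1/N) Σᵢ ‖ρᵢ − ρ̄‖₁ ≥ 8ε − (1/N²) Σᵢⱼ Re Tr[Θ Uᵢᴴ Uⱼ ρ0 Uⱼᴴ Uᵢ]`. -/
theorem mean_traceDist_lower_bound (d N : ℕ) (hd : 0 < d) (hdeven : Even d) (hN : 0 < N)
    (ε : ℝ) (hε : 0 < ε) (hε8 : ε ≤ 1 / 8)
    (U : Fin N → Matrix (Fin d) (Fin d) ℂ)
    (hU : ∀ i, U i ∈ Matrix.unitaryGroup (Fin d) ℂ) :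
    8 * ε - ((N : ℝ) ^ 2)⁻¹ *
        ∑ i, ∑ j, ((Theta d * (U i)ᴴ * U j * rho0 d ε * (U j)ᴴ * U i).trace).re
      ≤ (N : ℝ)⁻¹ *
        ∑ i, traceNorm (U i * rho0 d ε * (U i)ᴴ
          - ((N : ℂ))⁻¹ • ∑ j, U j * rho0 d ε * (U j)ᴴ) :=
  mean_traceDist_lower_bound_general d N hd hdeven hN ε U hU
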